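/- Let R = o[x] where o is a discrete valuation ring with uniformizer ϖ, let R' = o[x,z]/(xz−ϖ) and R'' = o[x,t]/(x−ϖt). For any f ∈ o[x] not in the ideal (x,ϖ), the map R'_f ⊕ R''_f → R'_f[1/z] = R''_f[1/t] sending (f₁,f₂) to f₁ − f₂ is surjective, where R'_f, R''_f denote localizations at f and the gluing identifies z = t⁻¹. -/

import Mathlib

/-!
On the overlap `T = R'_f[1/z]` of the two charts, every element is `p(z) · t^n` with `p` a
polynomial in `z` whose coefficients come from `o[x]_f`, and `o[x]_f` maps into both charts
compatibly. Splitting `p(z) · t^n = ∑ c_j z^j t^n` according to `j ≥ n` (a monomial `c z^(j-n)`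
from `R'_f`) or `j < n` (a monomial `c t^(n-j)` from `R''_f`) writes it as a sum of an element
of `R'_f` and an element of `R''_f`.
-/

open MvPolynomial

theorem MvPolynomial.ringHom_apply_mem {σ R S B : Type*} [CommSemiring R] [CommSemiring S]
    [SetLike B S] [SubsemiringClass B S] (φ : MvPolynomial σ R →+* S) {s : B}
    (hC : ∀ c, φ (C c) ∈ s) (hX : ∀ i, φ (X i) ∈ s) (P : MvPolynomial σ R) : φ P ∈ s := by
  induction P using MvPolynomial.induction_on with
  | C c => exact hC c
  | add p q hp hq => simpa only [map_add] using add_mem hp hq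
  | mul_X p i hp => simpa only [map_mul] using mul_mem hp (hX i)

theorem IsLocalization.Away.exists_eq_mul_pow_mul_pow {A B T : Type*} [CommRing A] [CommRing B]
    [CommRing T] [Algebra A B] [Algebra B T] {s u : A} [IsLocalization.Away s B]
    [IsLocalization.Away (algebraMap A B u) T] {w t : T}
    (hw : w * algebraMap B T (algebraMap A B s) = 1)
    (ht : t * algebraMap B T (algebraMap A B u) = 1) (y : T) :
    ∃ (r : A) (m n : ℕ), y = algebraMap B T (algebraMap A B r) * w ^ m * t ^ n := by
  obtain ⟨n, b, hb⟩ := IsLocalization.Away.surj (algebraMap A B u) y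
  obtain ⟨m, r, hr⟩ := IsLocalization.Away.surj s b
  refine ⟨r, m, n, ?_⟩
  have hwm := congrArg (· ^ m) hw
  have htn := congrArg (· ^ n) ht
  simp only [one_pow] at hwm htn
  rw [← hr, map_mul, map_pow, ← hb]
  linear_combination -y * htn - y * (t * algebraMap B T (algebraMap A B u)) ^ n * hwm

theorem RingHom.exists_mem_range_inf_mul_eq_one {B₁ B₂ T : Type*} [Ring B₁] [Ring B₂] [Ring T]
    (g₁ : B₁ →+* T) (g₂ : B₂ →+* T) {b₁ : B₁} {b₂ : B₂} (h₁ : IsUnit b₁) (h₂ : IsUnit b₂)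
    (h : g₁ b₁ = g₂ b₂) : ∃ w ∈ g₁.range ⊓ g₂.range, w * g₁ b₁ = 1 := by
  obtain ⟨u₁, rfl⟩ := h₁
  obtain ⟨u₂, rfl⟩ := h₂
  have hinv : g₂ ↑u₂⁻¹ = g₁ ↑u₁⁻¹ :=
    left_inv_eq_right_inv (a := g₁ u₁) (by rw [h, ← map_mul, Units.inv_mul, map_one])
      (by rw [← map_mul, Units.mul_inv, map_one])
  exact ⟨g₁ ↑u₁⁻¹, ⟨⟨_, rfl⟩, ⟨_, hinv⟩⟩, by rw [← map_mul, Units.inv_mul, map_one]⟩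

namespace Subring

variable {T : Type*} [CommRing T] {S₁ S₂ : Subring T} {z t : T}

theorem mul_pow_mul_pow_mem_sup (hz : z ∈ S₁) (ht : t ∈ S₂) (hzt : z * t = 1)
    {a : T} (ha : a ∈ S₁ ⊓ S₂) (j n : ℕ) :
    a * z ^ j * t ^ n ∈ S₁.toAddSubgroup ⊔ S₂.toAddSubgroup := by
  rcases le_total n j with h | h
  · obtain ⟨k, rfl⟩ := Nat.exists_eq_add_of_le h
    have hztn : (z * t) ^ n = 1 := by rw [hzt, one_pow]
    have : a * z ^ (n + k) * t ^ n = a * z ^ k := by linear_combination a * z ^ k * hztn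
    exact this ▸ AddSubgroup.mem_sup_left (S₁.mul_mem ha.1 (S₁.pow_mem hz k))
  · obtain ⟨k, rfl⟩ := Nat.exists_eq_add_of_le h
    have hztj : (z * t) ^ j = 1 := by rw [hzt, one_pow]
    have : a * z ^ j * t ^ (j + k) = a * t ^ k := by linear_combination a * t ^ k * hztj
    exact this ▸ AddSubgroup.mem_sup_right (S₂.mul_mem ha.2 (S₂.pow_mem ht k))

theorem mul_pow_mem_sup_of_mem_adjoin (hz : z ∈ S₁) (ht : t ∈ S₂) (hzt : z * t = 1) {p : T}
    (hp : p ∈ Algebra.adjoin (S₁ ⊓ S₂ : Subring T) {z}) (n : ℕ) :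
    p * t ^ n ∈ S₁.toAddSubgroup ⊔ S₂.toAddSubgroup := by
  rw [Algebra.adjoin_singleton_eq_range_aeval] at hp
  obtain ⟨q, rfl⟩ := hp
  induction q using Polynomial.induction_on' with
  | add p q hp hq => simpa only [map_add, add_mul] using add_mem hp hq
  | monomial j a =>
    simp only [AlgHom.toRingHom_eq_coe, RingHom.coe_coe, Polynomial.aeval_monomial]
    exact mul_pow_mul_pow_mem_sup hz ht hzt a.2 j n

end Subring

theorem blowup_cech_H1_vanishing_general
    (o : Type*) [CommRing o]
    (f : Polynomial o)
    -- `R' = o[x,z]/(xz - ϖ)` and `R'' = o[x,t]/(x - ϖt)`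
    (R' R'' : Type*) [CommRing R'] [CommRing R'']
    (q' : MvPolynomial (Fin 2) o →+* R') (q'' : MvPolynomial (Fin 2) o →+* R'')
    (hq' : Function.Surjective q')
    -- the localizations `R'_f` and `R''_f` at (the images of) `f`
    (Rf' Rf'' : Type*) [CommRing Rf'] [CommRing Rf'']
    [Algebra R' Rf'] [Algebra R'' Rf'']
    [IsLocalization.Away (q' (Polynomial.eval₂ (C : o →+* MvPolynomial (Fin 2) o) (X 0) f)) Rf']
    [IsLocalization.Away (q'' (Polynomial.eval₂ (C : o →+* MvPolynomial (Fin 2) o) (X 0) f)) Rf'']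
    -- `T = R'_f[1/z]`
    (T : Type*) [CommRing T] [Algebra Rf' T]
    [IsLocalization.Away (algebraMap R' Rf' (q' (X 1))) T]
    -- the gluing map `R''_f → T`, identifying `t = z⁻¹`
    (β : Rf'' →+* T)
    (hβx : β (algebraMap R'' Rf'' (q'' (X 0))) = algebraMap Rf' T (algebraMap R' Rf' (q' (X 0))))
    (hβo : ∀ c : o, β (algebraMap R'' Rf'' (q'' (C c))) =
      algebraMap Rf' T (algebraMap R' Rf' (q' (C c))))
    (hβt : β (algebraMap R'' Rf'' (q'' (X 1))) * algebraMap Rf' T (algebraMap R' Rf' (q' (X 1))) = 1) :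
    ∀ y : T, ∃ (f₁ : Rf') (f₂ : Rf''), algebraMap Rf' T f₁ - β f₂ = y := by
  intro y
  set F := Polynomial.eval₂ (C : o →+* MvPolynomial (Fin 2) o) (X 0) f
  set ι' := (algebraMap Rf' T).comp ((algebraMap R' Rf').comp q')
  set ι'' := β.comp ((algebraMap R'' Rf'').comp q'')
  set A := (algebraMap Rf' T).range ⊓ β.range
  have hF : ι' F = ι'' F := by
    have hC : ι''.comp C = ι'.comp C := RingHom.ext hβo
    simp only [F, Polynomial.hom_eval₂, hC]
    rw [show ι'' (X 0) = ι' (X 0) from hβx]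
  obtain ⟨w, hwA, hwF⟩ := RingHom.exists_mem_range_inf_mul_eq_one (algebraMap Rf' T) β
    (IsLocalization.Away.algebraMap_isUnit (q' F)) (IsLocalization.Away.algebraMap_isUnit (q'' F)) hF
  have hA : ∀ a ∈ A, a ∈ Algebra.adjoin A {ι' (X 1)} := fun a ha =>
    Subalgebra.algebraMap_mem _ (⟨a, ha⟩ : A)
  have hι' : ∀ P, ι' P ∈ Algebra.adjoin A {ι' (X 1)} := by
    refine MvPolynomial.ringHom_apply_mem ι' (fun c => hA _ ⟨⟨_, rfl⟩, ⟨_, hβo c⟩⟩) ?_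
    intro i
    fin_cases i
    · exact hA _ ⟨⟨_, rfl⟩, ⟨_, hβx⟩⟩
    · exact Algebra.self_mem_adjoin_singleton _ _
  obtain ⟨r, m, n, rfl⟩ := IsLocalization.Away.exists_eq_mul_pow_mul_pow hwF hβt y
  obtain ⟨P, rfl⟩ := hq' r
  obtain ⟨_, ⟨f₁, rfl⟩, _, ⟨g, rfl⟩, hsum⟩ := AddSubgroup.mem_sup.1 <|
    Subring.mul_pow_mem_sup_of_mem_adjoin (RingHom.mem_range_self _ _) (RingHom.mem_range_self _ _)
      ((mul_comm _ _).trans hβt) (mul_mem (hι' P) (pow_mem (hA w hwA) m)) n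
  exact ⟨f₁, -g, by rw [map_neg, sub_neg_eq_add, hsum]; rfl⟩

/-- Let `R = o[x]` with `o` a discrete valuation ring with uniformizer `ϖ`,
`R' = o[x,z]/(xz - ϖ)` and `R'' = o[x,t]/(x - ϖt)`.  For any `f ∈ o[x]` not in the ideal
`(x, ϖ)`, the map `R'_f ⊕ R''_f → R'_f[1/z] = R''_f[1/t]`, `(f₁, f₂) ↦ f₁ - f₂`, is surjective.
Here `R'_f`, `R''_f` are the localizations at `f` and the gluing identifies `z = t⁻¹`.

We present `R'`, `R''` as quotients of `o[X₀, X₁]` (`X₀ = x`, `X₁ = z` resp. `t`), the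
localizations via `IsLocalization.Away`, and the common localization `T = R'_f[1/z]` together
with the gluing map `β : R''_f → T` characterized by `β(x) = x`, `β(c) = c` for `c ∈ o`, and
`β(t)·z = 1`. -/
theorem blowup_cech_H1_vanishing
    (o : Type*) [CommRing o] [IsDomain o] [IsDiscreteValuationRing o]
    (ϖ : o) (hϖ : Irreducible ϖ)
    (f : Polynomial o)
    (hf : f ∉ Ideal.span ({Polynomial.X, Polynomial.C ϖ} : Set (Polynomial o)))
    -- `R' = o[x,z]/(xz - ϖ)` and `R'' = o[x,t]/(x - ϖt)`
    (R' R'' : Type*) [CommRing R'] [CommRing R'']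
    (q' : MvPolynomial (Fin 2) o →+* R') (q'' : MvPolynomial (Fin 2) o →+* R'')
    (hq' : Function.Surjective q')
    (hker' : RingHom.ker q' = Ideal.span {(X 0 * X 1 - C ϖ : MvPolynomial (Fin 2) o)})
    (hq'' : Function.Surjective q'')
    (hker'' : RingHom.ker q'' = Ideal.span {(X 0 - C ϖ * X 1 : MvPolynomial (Fin 2) o)})
    -- the localizations `R'_f` and `R''_f` at (the images of) `f`
    (Rf' Rf'' : Type*) [CommRing Rf'] [CommRing Rf'']
    [Algebra R' Rf'] [Algebra R'' Rf'']
    [IsLocalization.Away (q' (Polynomial.eval₂ (C : o →+* MvPolynomial (Fin 2) o) (X 0) f)) Rf']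
    [IsLocalization.Away (q'' (Polynomial.eval₂ (C : o →+* MvPolynomial (Fin 2) o) (X 0) f)) Rf'']
    -- `T = R'_f[1/z]`
    (T : Type*) [CommRing T] [Algebra Rf' T]
    [IsLocalization.Away (algebraMap R' Rf' (q' (X 1))) T]
    -- the gluing map `R''_f → T`, identifying `t = z⁻¹`
    (β : Rf'' →+* T)
    (hβx : β (algebraMap R'' Rf'' (q'' (X 0))) = algebraMap Rf' T (algebraMap R' Rf' (q' (X 0))))
    (hβo : ∀ c : o, β (algebraMap R'' Rf'' (q'' (C c))) =
      algebraMap Rf' T (algebraMap R' Rf' (q' (C c))))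
    (hβt : β (algebraMap R'' Rf'' (q'' (X 1))) * algebraMap Rf' T (algebraMap R' Rf' (q' (X 1))) = 1) :
    ∀ y : T, ∃ (f₁ : Rf') (f₂ : Rf''), algebraMap Rf' T f₁ - β f₂ = y :=
  blowup_cech_H1_vanishing_general o f R' R'' q' q'' hq' Rf' Rf'' T β hβx hβo hβt
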